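/- arXiv:2309.00286 — 2 statements merged into one kernel-verified Lean document; each statement's English description precedes it below -/
import Mathlib

section
/- Let k ≥ 1 and suppose for each j = 1, ..., k we are given rationals U_j ≥ 0 and V_j > 0. Consider the system of equations in unknowns A_1, ..., A_k and S = A_1 + ... + A_k: U_j A_j = (U_j + V_j)(1 + A_j - S) and V_j A_j = (U_j + V_j)(S - 1) for all j. Then any solution satisfies S > 1, A_j > 0 for all j, and 1 + A_j - S ≥ 0 for all j. -/
/-! Each equation `V_j A_j = (U_j + V_j)(S - 1)` says `A_j = c_j (S - 1)` with `c_j = 1 + U_j / V_j ≥ 1`.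
If `S ≤ 1`, every `A_j` would be at most `S - 1 ≤ 0`, and summing over the `k ≥ 1` indices gives `S ≤ S - 1`.
Hence `S > 1`, so `A_j > 0`, and `1 + A_j - S = (c_j - 1)(S - 1) ≥ 0`. -/

open Finset

section

variable {ι K : Type*} [Fintype ι] [Ring K] [LinearOrder K] [IsStrictOrderedRing K]

theorem one_lt_sum_of_eq_mul_sum_sub_one [Nonempty ι] {A c : ι → K} (hc : ∀ i, 1 ≤ c i)
    (hA : ∀ i, A i = c i * (∑ j, A j - 1)) : 1 < ∑ i, A i := by
  by_contra! hS
  have ht : ∑ j, A j - 1 ≤ 0 := sub_nonpos.2 hS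
  have hAt : ∀ i, A i ≤ ∑ j, A j - 1 := fun i => by
    rw [hA i]
    exact mul_le_of_one_le_left ht (hc i)
  have hcard : (1 : K) ≤ Fintype.card ι := by exact_mod_cast Fintype.card_pos
  have : ∑ i, A i ≤ ∑ i, A i - 1 :=
    calc ∑ i, A i ≤ ∑ _i : ι, (∑ j, A j - 1) := sum_le_sum fun i _ => hAt i
      _ = Fintype.card ι * (∑ j, A j - 1) := by rw [sum_const, card_univ, nsmul_eq_mul]
      _ ≤ ∑ j, A j - 1 := mul_le_of_one_le_left ht hcard
  exact (sub_one_lt _).not_ge this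

end

theorem sparse_system_solution_general (k : ℕ) (hk : 1 ≤ k)
    (U V A : Fin k → ℚ)
    (hU : ∀ j, 0 ≤ U j) (hV : ∀ j, 0 < V j)
    (h2 : ∀ j, V j * A j = (U j + V j) * ((∑ i, A i) - 1)) :
    1 < (∑ i, A i) ∧ (∀ j, 0 < A j) ∧ (∀ j, 0 ≤ 1 + A j - (∑ i, A i)) := by
  have : Nonempty (Fin k) := ⟨⟨0, hk⟩⟩
  set c := fun j => (U j + V j) / V j
  have hc : ∀ j, 1 ≤ c j := fun j => (one_le_div (hV j)).2 (by linarith [hU j])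
  have hA : ∀ j, A j = c j * (∑ i, A i - 1) := fun j => by
    rw [div_mul_eq_mul_div, eq_div_iff (hV j).ne', mul_comm, h2 j]
  have hS := one_lt_sum_of_eq_mul_sum_sub_one hc hA
  refine ⟨hS, fun j => ?_, fun j => ?_⟩
  · rw [hA j]
    exact mul_pos (by linarith [hc j]) (by linarith)
  · have h : 1 + A j - ∑ i, A i = (c j - 1) * (∑ i, A i - 1) := by rw [hA j]; ring
    rw [h]
    exact mul_nonneg (by linarith [hc j]) (by linarith)

/-- Sparse-case system: if `U_j ≥ 0`, `V_j > 0`, `S = Σ A_j`, and for all `j`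
`U_j A_j = (U_j + V_j)(1 + A_j - S)` and `V_j A_j = (U_j + V_j)(S - 1)`, then
`S > 1`, every `A_j > 0`, and `1 + A_j - S ≥ 0`. -/
theorem sparse_system_solution (k : ℕ) (hk : 1 ≤ k)
    (U V A : Fin k → ℚ)
    (hU : ∀ j, 0 ≤ U j) (hV : ∀ j, 0 < V j)
    (h1 : ∀ j, U j * A j = (U j + V j) * (1 + A j - (∑ i, A i)))
    (h2 : ∀ j, V j * A j = (U j + V j) * ((∑ i, A i) - 1)) :
    1 < (∑ i, A i) ∧ (∀ j, 0 < A j) ∧ (∀ j, 0 ≤ 1 + A j - (∑ i, A i)) :=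
  sparse_system_solution_general k hk U V A hU hV h2
end

section
/- Let k ≥ 1, and for j = 1, ..., k let U_j ≥ 0 and V_j > 0 be rationals satisfying V_j A_j = (U_j + V_j)(S - 1) where S = A_1 + ... + A_k. Suppose S ≤ 1. If S = 1 then all A_j = 0, contradicting S = 1 ≠ 0; if S < 1 then all A_j < 0, yet Σ_j (U_j/(U_j+V_j)) A_j = (k-1)(1-S) + 1 > 1 > 0, a contradiction. Hence no solution with S ≤ 1 exists, i.e. necessarily S > 1. -/
/-! If `S ≤ 1`, each equation `V_j A_j = (U_j + V_j)(S - 1)` forces `A_j ≤ S - 1 ≤ 0`,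
and summing over the nonempty index set gives the absurd `S ≤ S - 1`. -/

theorem le_of_mul_eq_add_mul_of_nonpos {α : Type*} [Semiring α] [LinearOrder α] [IsStrictOrderedRing α]
    {u v a t : α} (hu : 0 ≤ u) (hv : 0 < v) (ht : t ≤ 0) (h : v * a = (u + v) * t) :
    a ≤ t := by
  refine le_of_mul_le_mul_left ?_ hv
  calc v * a = u * t + v * t := by rw [h, add_mul]
    _ ≤ 0 + v * t := add_le_add_left (mul_nonpos_of_nonneg_of_nonpos hu ht) _
    _ = v * t := zero_add _

theorem Finset.sum_le_of_forall_le_of_nonpos {ι α : Type*} [AddCommMonoid α] [PartialOrder α]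
    [IsOrderedAddMonoid α] {s : Finset ι} (hs : s.Nonempty) {f : ι → α} {t : α} (ht : t ≤ 0)
    (hf : ∀ i ∈ s, f i ≤ t) : ∑ i ∈ s, f i ≤ t := by
  classical
  obtain ⟨j, hj⟩ := hs
  calc ∑ i ∈ s, f i = f j + ∑ i ∈ s.erase j, f i := (add_sum_erase s f hj).symm
    _ ≤ t + 0 := add_le_add (hf j hj)
        (sum_nonpos fun i hi => (hf i (mem_of_mem_erase hi)).trans ht)
    _ = t := add_zero t

theorem sparse_system_S_gt_one_general (k : ℕ) (hk : 1 ≤ k)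
    (U V A : Fin k → ℚ)
    (hU : ∀ j, 0 ≤ U j) (hV : ∀ j, 0 < V j)
    (h2 : ∀ j, V j * A j = (U j + V j) * ((∑ i, A i) - 1)) :
    1 < (∑ i, A i) := by
  by_contra! hS
  have hS' : (∑ i, A i) - 1 ≤ 0 := sub_nonpos.2 hS
  have hA : ∀ j ∈ Finset.univ, A j ≤ (∑ i, A i) - 1 :=
    fun j _ => le_of_mul_eq_add_mul_of_nonpos (hU j) (hV j) hS' (h2 j)
  have hsum := Finset.sum_le_of_forall_le_of_nonpos ⟨⟨0, hk⟩, Finset.mem_univ _⟩ hS' hA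
  linarith

/-- Contradiction argument: with `U_j ≥ 0`, `V_j > 0`, `S = Σ A_j`, and the system
`U_j A_j = (U_j + V_j)(1 + A_j - S)`, `V_j A_j = (U_j + V_j)(S - 1)`, no solution
with `S ≤ 1` exists; necessarily `S > 1`. -/
theorem sparse_system_S_gt_one (k : ℕ) (hk : 1 ≤ k)
    (U V A : Fin k → ℚ)
    (hU : ∀ j, 0 ≤ U j) (hV : ∀ j, 0 < V j)
    (h1 : ∀ j, U j * A j = (U j + V j) * (1 + A j - (∑ i, A i)))
    (h2 : ∀ j, V j * A j = (U j + V j) * ((∑ i, A i) - 1)) :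
    1 < (∑ i, A i) :=
  sparse_system_S_gt_one_general k hk U V A hU hV h2
end
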